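/- Fix an integer n ≥ 4 and let π_L : ℝ^{2n−1} → ℝⁿ×ℝⁿ be as in the model, with critical set S₁ = {x_{n−1} = 0, x_n + y_{n−1} = 0}. Then at every point p = (x, y_{n−1}, θ'') ∈ S₁ with θ₁ ≠ 0: (i) the kernel of Dπ_L(p) is the 1-dimensional subspace ℝ·e_{y_{n−1}}; (ii) ker Dπ_L(p) ∩ T_p S₁ = {0}; and (iii) the map χ : ℝ^{2n−1} → ℝ² defined by χ(x, y_{n−1}, θ'') = (−2x_{n−1}θ₁, 2(x_n + y_{n−1})θ₁) has surjective differential (rank 2) at p. Hence π_L has a cross cap singularity along S₁. -/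

import Mathlib

/-- The left projection `π_L` of the model folded cross cap canonical relation.
Points of `ℝ^{2n-1}` are written `(x, y_{n-1}, θ'')` with `x = (x₁, …, x_n)`
(indexed by `0, …, n-1`), `y_{n-1} ∈ ℝ`, `θ'' = (θ₁, …, θ_{n-2})` (indexed by
`0, …, n-3`). -/
noncomputable def piL (n : ℕ) (hn : 4 ≤ n)
    (p : (Fin n → ℝ) × ℝ × (Fin (n - 2) → ℝ)) :
    (Fin n → ℝ) × (Fin n → ℝ) :=
  ⟨p.1, fun i =>
    if h1 : (i : ℕ) = n - 2 then
      -2 * p.1 ⟨n - 2, by omega⟩ * p.2.1 * p.2.2 ⟨0, by omega⟩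
    else if h2 : (i : ℕ) = n - 1 then
      (p.2.1 ^ 2 + 2 * p.1 ⟨n - 1, by omega⟩ * p.2.1) * p.2.2 ⟨0, by omega⟩
    else p.2.2 ⟨(i : ℕ), by have := i.isLt; omega⟩⟩

abbrev EE (n : ℕ) := (Fin n → ℝ) × ℝ × (Fin (n - 2) → ℝ)

noncomputable def Xc (n : ℕ) (i : Fin n) : EE n →L[ℝ] ℝ :=
  (ContinuousLinearMap.proj i).comp
    (ContinuousLinearMap.fst ℝ (Fin n → ℝ) (ℝ × (Fin (n - 2) → ℝ)))

noncomputable def Yc (n : ℕ) : EE n →L[ℝ] ℝ :=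
  (ContinuousLinearMap.fst ℝ ℝ (Fin (n - 2) → ℝ)).comp
    (ContinuousLinearMap.snd ℝ (Fin n → ℝ) (ℝ × (Fin (n - 2) → ℝ)))

noncomputable def Tc (n : ℕ) (j : Fin (n - 2)) : EE n →L[ℝ] ℝ :=
  (ContinuousLinearMap.proj j).comp
    ((ContinuousLinearMap.snd ℝ ℝ (Fin (n - 2) → ℝ)).comp
      (ContinuousLinearMap.snd ℝ (Fin n → ℝ) (ℝ × (Fin (n - 2) → ℝ))))

@[simp] lemma Xc_apply (n : ℕ) (i : Fin n) (v : EE n) : Xc n i v = v.1 i := rfl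
@[simp] lemma Yc_apply (n : ℕ) (v : EE n) : Yc n v = v.2.1 := rfl
@[simp] lemma Tc_apply (n : ℕ) (j : Fin (n - 2)) (v : EE n) : Tc n j v = v.2.2 j := rfl

noncomputable def Dmap (n : ℕ) (hn : 4 ≤ n) (p : EE n) :
    EE n →L[ℝ] (Fin n → ℝ) × (Fin n → ℝ) :=
  (ContinuousLinearMap.fst ℝ (Fin n → ℝ) (ℝ × (Fin (n - 2) → ℝ))).prod
    (ContinuousLinearMap.pi fun i : Fin n =>
      if h1 : (i : ℕ) = n - 2 then
        (-2 * p.2.1 * p.2.2 ⟨0, by omega⟩) • Xc n ⟨n - 2, by omega⟩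
      else if h2 : (i : ℕ) = n - 1 then
        (2 * p.2.1 * p.2.2 ⟨0, by omega⟩) • Xc n ⟨n - 1, by omega⟩
          + (-(p.2.1 ^ 2)) • Tc n ⟨0, by omega⟩
      else Tc n ⟨(i : ℕ), by have := i.isLt; omega⟩)

lemma hasFDerivAt_piL (n : ℕ) (hn : 4 ≤ n) (p : EE n)
    (hp1 : ∀ h : n - 2 < n, p.1 ⟨n - 2, h⟩ = 0)
    (hp2 : ∀ h : n - 1 < n, p.1 ⟨n - 1, h⟩ = -p.2.1) :
    HasFDerivAt (piL n hn) (Dmap n hn p) p := by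
  unfold piL Dmap
  refine HasFDerivAt.prodMk (hasFDerivAt_fst) (hasFDerivAt_pi.mpr fun i => ?_)
  by_cases h1 : (i : ℕ) = n - 2
  · simp only [dif_pos h1]
    have h := ((((Xc n ⟨n - 2, by omega⟩).hasFDerivAt (x := p)).const_mul (-2 : ℝ)).mul
        (Yc n).hasFDerivAt (x := p)).mul (Tc n ⟨0, by omega⟩).hasFDerivAt (x := p)
    refine h.congr_fderiv (ContinuousLinearMap.ext fun v => ?_)
    simp [hp1]
    ring
  · by_cases h2 : (i : ℕ) = n - 1
    · simp only [dif_neg h1, dif_pos h2]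
      simp only [pow_two]
      have hsq := ((Yc n).hasFDerivAt (x := p)).mul ((Yc n).hasFDerivAt (x := p))
      have h := ((hsq.add ((((Xc n ⟨n - 1, by omega⟩).hasFDerivAt (x := p)).const_mul (2 : ℝ)).mul
          (Yc n).hasFDerivAt (x := p))).mul (Tc n ⟨0, by omega⟩).hasFDerivAt (x := p))
      refine h.congr_fderiv (ContinuousLinearMap.ext fun v => ?_)
      simp [hp2]
      ring
    · simp only [dif_neg h1, dif_neg h2]
      exact (Tc n ⟨(i : ℕ), by have := i.isLt; omega⟩).hasFDerivAt

noncomputable def Dchi (n : ℕ) (hn : 4 ≤ n) (p : EE n) : EE n →L[ℝ] ℝ × ℝ :=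
  ((-2 * p.2.2 ⟨0, Nat.sub_pos_of_lt (by omega)⟩) • Xc n ⟨n - 2, Nat.sub_lt (by omega) two_pos⟩).prod
    ((2 * p.2.2 ⟨0, Nat.sub_pos_of_lt (by omega)⟩) • (Xc n ⟨n - 1, Nat.sub_lt (by omega) one_pos⟩ + Yc n))

lemma hasFDerivAt_chi (n : ℕ) (hn : 4 ≤ n) (p : EE n)
    (hp1 : ∀ h : n - 2 < n, p.1 ⟨n - 2, h⟩ = 0)
    (hp2 : ∀ h : n - 1 < n, p.1 ⟨n - 1, h⟩ = -p.2.1) :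
    HasFDerivAt
      (fun r : (Fin n → ℝ) × ℝ × (Fin (n - 2) → ℝ) =>
        ((-2 * r.1 ⟨n - 2, Nat.sub_lt (by omega) two_pos⟩ * r.2.2 ⟨0, Nat.sub_pos_of_lt (by omega)⟩,
          2 * (r.1 ⟨n - 1, Nat.sub_lt (by omega) one_pos⟩ + r.2.1) * r.2.2 ⟨0, Nat.sub_pos_of_lt (by omega)⟩) : ℝ × ℝ))
      (Dchi n hn p) p := by
  unfold Dchi
  refine HasFDerivAt.prodMk ?_ ?_
  · have h := (((Xc n ⟨n - 2, by omega⟩).hasFDerivAt (x := p)).const_mul (-2 : ℝ)).mul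
      ((Tc n ⟨0, by omega⟩).hasFDerivAt (x := p))
    refine h.congr_fderiv (ContinuousLinearMap.ext fun v => ?_)
    simp [hp1]
    ring
  · have h := ((((Xc n ⟨n - 1, by omega⟩).hasFDerivAt (x := p)).add
      ((Yc n).hasFDerivAt (x := p))).const_mul (2 : ℝ)).mul
      ((Tc n ⟨0, by omega⟩).hasFDerivAt (x := p))
    refine h.congr_fderiv (ContinuousLinearMap.ext fun v => ?_)
    simp [hp2]
    ring

/-- at every point `p ∈ S₁ = {x_{n-1} = 0, x_n + y_{n-1} = 0}` with
`θ₁ ≠ 0`: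
(i) `ker Dπ_L(p)` is the line `ℝ · e_{y_{n-1}}`;
(ii) `ker Dπ_L(p) ∩ T_p S₁ = 0`, where
`T_p S₁ = {v : v_{x_{n-1}} = 0, v_{x_n} + v_{y_{n-1}} = 0}`;
(iii) the map `χ(x, y_{n-1}, θ'') = (-2 x_{n-1} θ₁, 2(x_n + y_{n-1})θ₁)` has surjective
differential at `p`.  Hence `π_L` has a cross cap singularity along `S₁`. -/
theorem stmt_7 (n : ℕ) (hn : 4 ≤ n)
    (p : (Fin n → ℝ) × ℝ × (Fin (n - 2) → ℝ))
    (hθ : p.2.2 ⟨0, by omega⟩ ≠ 0)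
    (hp : p.1 ⟨n - 2, by omega⟩ = 0 ∧ p.1 ⟨n - 1, by omega⟩ + p.2.1 = 0) :
    -- (i)
    LinearMap.ker (fderiv ℝ (piL n hn) p :
        (Fin n → ℝ) × ℝ × (Fin (n - 2) → ℝ) →ₗ[ℝ] (Fin n → ℝ) × (Fin n → ℝ)) =
      Submodule.span ℝ {((0, 1, 0) : (Fin n → ℝ) × ℝ × (Fin (n - 2) → ℝ))} ∧
    -- (ii)
    (∀ v ∈ LinearMap.ker (fderiv ℝ (piL n hn) p :
        (Fin n → ℝ) × ℝ × (Fin (n - 2) → ℝ) →ₗ[ℝ] (Fin n → ℝ) × (Fin n → ℝ)),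
      v.1 ⟨n - 2, by omega⟩ = 0 → v.1 ⟨n - 1, by omega⟩ + v.2.1 = 0 → v = 0) ∧
    -- (iii)
    Function.Surjective
      (fderiv ℝ
        (fun r : (Fin n → ℝ) × ℝ × (Fin (n - 2) → ℝ) =>
          ((-2 * r.1 ⟨n - 2, by omega⟩ * r.2.2 ⟨0, by omega⟩,
            2 * (r.1 ⟨n - 1, by omega⟩ + r.2.1) * r.2.2 ⟨0, by omega⟩) : ℝ × ℝ)) p) := by
  have hp1 : ∀ h : n - 2 < n, p.1 ⟨n - 2, h⟩ = 0 := fun _ => hp.1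
  have hp2 : ∀ h : n - 1 < n, p.1 ⟨n - 1, h⟩ = -p.2.1 := fun _ => by
    have := hp.2; linarith
  have hD := hasFDerivAt_piL n hn p hp1 hp2
  rw [hD.fderiv]
  have hker : LinearMap.ker (Dmap n hn p :
      (Fin n → ℝ) × ℝ × (Fin (n - 2) → ℝ) →ₗ[ℝ] (Fin n → ℝ) × (Fin n → ℝ)) =
      Submodule.span ℝ {((0, 1, 0) : (Fin n → ℝ) × ℝ × (Fin (n - 2) → ℝ))} := by
    apply le_antisymm
    · rintro ⟨v1, v2, v3⟩ hv
      rw [LinearMap.mem_ker] at hv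
      have hv1 : v1 = 0 := congrArg Prod.fst hv
      have hv3 : v3 = 0 := by
        funext j
        have hj : (j : ℕ) < n := by have := j.isLt; omega
        have hjj := j.isLt
        have h := congrFun (congrArg Prod.snd hv) ⟨(j : ℕ), hj⟩
        simp only [Dmap, ContinuousLinearMap.coe_coe, ContinuousLinearMap.prod_apply, ContinuousLinearMap.pi_apply] at h
        rw [dif_neg (by omega), dif_neg (by omega)] at h
        simpa using h
      rw [Submodule.mem_span_singleton]
      exact ⟨v2, by simp [hv1, hv3, Prod.ext_iff]⟩
    · rw [Submodule.span_le, Set.singleton_subset_iff]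
      rw [SetLike.mem_coe, LinearMap.mem_ker]
      refine Prod.ext (by simp [Dmap]) ?_
      funext i
      simp only [Dmap, ContinuousLinearMap.coe_coe, ContinuousLinearMap.prod_apply, ContinuousLinearMap.pi_apply]
      split_ifs <;> simp
  refine ⟨hker, ?_, ?_⟩
  · intro v hv _ h2
    rw [hker, Submodule.mem_span_singleton] at hv
    obtain ⟨a, rfl⟩ := hv
    simp at h2
    simp [h2]
  · have hchi := hasFDerivAt_chi n hn p hp1 hp2
    have hsurj : Function.Surjective (Dchi n hn p) := by
      rintro ⟨a, b⟩
      refine ⟨(fun j => if (j : ℕ) = n - 2 then a / (-2 * p.2.2 ⟨0, by omega⟩)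
        else if (j : ℕ) = n - 1 then b / (2 * p.2.2 ⟨0, by omega⟩) else 0, 0, 0), ?_⟩
      simp only [Dchi, ContinuousLinearMap.prod_apply, ContinuousLinearMap.smul_apply,
        ContinuousLinearMap.add_apply, Xc_apply, Yc_apply]
      have hne : n - 2 ≠ n - 1 := by omega
      have hne' : n - 1 ≠ n - 2 := by omega
      have h0 : p.2.2 ⟨0, by omega⟩ ≠ 0 := hθ
      simp [hne, hne']
      constructor <;> field_simp
    intro w
    obtain ⟨v, hv⟩ := hsurj w
    refine ⟨v, ?_⟩
    rw [hchi.fderiv]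
    exact hv
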